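/- arXiv:2203.02253 — 8 statements merged into one kernel-verified Lean document; each statement's English description precedes it below -/
import Mathlib

section
/- For the FKG inequality setting: let μ be a product probability measure on A_N = {-1,0,...,K}^N, let h : A_N → [0,∞) satisfy h(χ)h(χ') ≤ h(χ∧χ')h(χ∨χ') for all χ, χ', with ∫ h dμ > 0, and let F, G : A_N → ℝ be non-decreasing for the componentwise partial order. Then ∫ F G h dμ · ∫ h dμ ≥ ∫ F h dμ · ∫ G h dμ. -/
/-!
The weight `h χ * ∏ i, w i (χ i)` is log-supermodular: `h` is by hypothesis, and the product
factor satisfies `w(a ⊓ b) w(a ⊔ b) = w(a) w(b)` coordinatewise. The box `{-1, …, K}^N` is a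
finite distributive sublattice of `ℤ^N`, so the claim is the FKG inequality on it.
-/

open Finset

theorem exists_nonneg_add_const {α : Type*} [Finite α] (f : α → ℝ) :
    ∃ c : ℝ, 0 ≤ f + fun _ ↦ c := by
  obtain ⟨m, hm⟩ := (Set.finite_range f).bddBelow
  exact ⟨-m, fun a ↦ by simpa [← sub_eq_add_neg] using hm ⟨a, rfl⟩⟩

theorem isSublattice_Icc {α : Type*} [Lattice α] (a b : α) : IsSublattice (Set.Icc a b) :=
  ⟨fun _ hx _ hy ↦ ⟨le_sup_of_le_left hx.1, sup_le hx.2 hy.2⟩,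
    fun _ hx _ hy ↦ ⟨le_inf hx.1 hy.1, inf_le_of_left_le hx.2⟩⟩

section FKG

variable {α : Type*} [DistribLattice α]

/-- Shifting `f` and `g` by constants changes both sides of the FKG inequality by the same amount,
so Mathlib's `fkg` for nonnegative functions yields it for arbitrary real monotone ones. -/
theorem fkg_of_monotone [Fintype α] {μ f g : α → ℝ} (hμ₀ : 0 ≤ μ) (hf : Monotone f)
    (hg : Monotone g) (hμ : ∀ a b, μ a * μ b ≤ μ (a ⊓ b) * μ (a ⊔ b)) :
    (∑ a, μ a * f a) * ∑ a, μ a * g a ≤ (∑ a, μ a * (f a * g a)) * ∑ a, μ a := by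
  obtain ⟨c, hc⟩ := exists_nonneg_add_const f
  obtain ⟨d, hd⟩ := exists_nonneg_add_const g
  have key := fkg _ _ μ hμ₀ hc hd (hf.add monotone_const) (hg.add monotone_const) hμ
  simp only [Pi.add_apply, mul_add, add_mul, sum_add_distrib, ← sum_mul, mul_left_comm _ c,
    mul_comm (f _) d, mul_left_comm _ d, ← mul_sum] at key
  linarith

theorem fkg_finset (s : Finset α) (hs : IsSublattice (s : Set α)) {μ f g : α → ℝ}
    (hμ₀ : ∀ a ∈ s, 0 ≤ μ a) (hf : MonotoneOn f s) (hg : MonotoneOn g s)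
    (hμ : ∀ a ∈ s, ∀ b ∈ s, μ a * μ b ≤ μ (a ⊓ b) * μ (a ⊔ b)) :
    (∑ a ∈ s, μ a * f a) * ∑ a ∈ s, μ a * g a ≤ (∑ a ∈ s, μ a * (f a * g a)) * ∑ a ∈ s, μ a := by
  let : DistribLattice s :=
    Subtype.distribLattice (fun _ _ ha hb ↦ hs.supClosed ha hb) (fun _ _ ha hb ↦ hs.infClosed ha hb)
  simp only [← sum_coe_sort s]
  exact fkg_of_monotone (μ := fun a : s ↦ μ a) (fun a ↦ hμ₀ a a.2)
    (fun a b hab ↦ hf a.2 b.2 hab) (fun a b hab ↦ hg a.2 b.2 hab)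
    (fun a b ↦ hμ a a.2 b b.2)

end FKG

theorem prod_apply_inf_mul_prod_apply_sup {ι β M : Type*} [Fintype ι] [LinearOrder β]
    [CommMonoid M] (w : ι → β → M) (a b : ι → β) :
    (∏ i, w i ((a ⊓ b) i)) * ∏ i, w i ((a ⊔ b) i) = (∏ i, w i (a i)) * ∏ i, w i (b i) := by
  simp only [← prod_mul_distrib]
  refine prod_congr rfl fun i _ ↦ ?_
  rcases le_total (a i) (b i) with hab | hab
  · simp [hab]
  · simp [hab, mul_comm]

theorem mul_prod_mul_le_inf_mul_sup {ι β : Type*} [Fintype ι] [LinearOrder β]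
    {h : (ι → β) → ℝ} {w : ι → β → ℝ} (hw : ∀ i x, 0 ≤ w i x) {a b : ι → β}
    (hab : h a * h b ≤ h (a ⊓ b) * h (a ⊔ b)) :
    (h a * ∏ i, w i (a i)) * (h b * ∏ i, w i (b i)) ≤
      (h (a ⊓ b) * ∏ i, w i ((a ⊓ b) i)) * (h (a ⊔ b) * ∏ i, w i ((a ⊔ b) i)) := by
  rw [mul_mul_mul_comm, mul_mul_mul_comm (h (a ⊓ b)), prod_apply_inf_mul_prod_apply_sup]
  exact mul_le_mul_of_nonneg_right hab
    (mul_nonneg (prod_nonneg fun i _ ↦ hw _ _) (prod_nonneg fun i _ ↦ hw _ _))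

theorem stmt_4_general (K N : ℕ)
    (w : Fin N → ℤ → ℝ) (hw0 : ∀ i x, 0 ≤ w i x)
    (h : (Fin N → ℤ) → ℝ) (hh0 : ∀ χ, 0 ≤ h χ)
    (hls : ∀ χ χ' : Fin N → ℤ,
      χ ∈ Fintype.piFinset (fun _ : Fin N => Finset.Icc (-1 : ℤ) (K : ℤ)) →
      χ' ∈ Fintype.piFinset (fun _ : Fin N => Finset.Icc (-1 : ℤ) (K : ℤ)) →
      h χ * h χ' ≤ h (fun i => min (χ i) (χ' i)) * h (fun i => max (χ i) (χ' i)))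
    (F G : (Fin N → ℤ) → ℝ)
    (hF : ∀ χ χ' : Fin N → ℤ, (∀ i, χ i ≤ χ' i) → F χ ≤ F χ')
    (hG : ∀ χ χ' : Fin N → ℤ, (∀ i, χ i ≤ χ' i) → G χ ≤ G χ') :
    (∑ χ ∈ Fintype.piFinset (fun _ : Fin N => Finset.Icc (-1 : ℤ) (K : ℤ)),
        F χ * h χ * ∏ i, w i (χ i)) *
      (∑ χ ∈ Fintype.piFinset (fun _ : Fin N => Finset.Icc (-1 : ℤ) (K : ℤ)),
        G χ * h χ * ∏ i, w i (χ i)) ≤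
    (∑ χ ∈ Fintype.piFinset (fun _ : Fin N => Finset.Icc (-1 : ℤ) (K : ℤ)),
        F χ * G χ * h χ * ∏ i, w i (χ i)) *
      (∑ χ ∈ Fintype.piFinset (fun _ : Fin N => Finset.Icc (-1 : ℤ) (K : ℤ)),
        h χ * ∏ i, w i (χ i)) := by
  set s := Fintype.piFinset fun _ : Fin N ↦ Finset.Icc (-1 : ℤ) K
  have hs : IsSublattice (s : Set (Fin N → ℤ)) := by
    rw [show s = Icc (fun _ ↦ -1) (fun _ ↦ (K : ℤ)) from (Pi.Icc_eq _ _).symm, coe_Icc]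
    exact isSublattice_Icc _ _
  have key := fkg_finset s hs (fun χ _ ↦ mul_nonneg (hh0 χ) (prod_nonneg fun i _ ↦ hw0 _ _))
    (fun χ _ χ' _ ↦ hF χ χ') (fun χ _ χ' _ ↦ hG χ χ')
    (fun χ hχ χ' hχ' ↦ mul_prod_mul_le_inf_mul_sup hw0 (hls χ χ' hχ hχ'))
  convert key using 3 <;> ring

theorem stmt_4 (K N : ℕ) (hK : 2 ≤ K) (hN : 1 ≤ N)
    (w : Fin N → ℤ → ℝ) (hw0 : ∀ i x, 0 ≤ w i x)
    (hw1 : ∀ i, ∑ x ∈ Finset.Icc (-1 : ℤ) (K : ℤ), w i x = 1)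
    (h : (Fin N → ℤ) → ℝ) (hh0 : ∀ χ, 0 ≤ h χ)
    (hls : ∀ χ χ' : Fin N → ℤ,
      χ ∈ Fintype.piFinset (fun _ : Fin N => Finset.Icc (-1 : ℤ) (K : ℤ)) →
      χ' ∈ Fintype.piFinset (fun _ : Fin N => Finset.Icc (-1 : ℤ) (K : ℤ)) →
      h χ * h χ' ≤ h (fun i => min (χ i) (χ' i)) * h (fun i => max (χ i) (χ' i)))
    (hpos : 0 < ∑ χ ∈ Fintype.piFinset (fun _ : Fin N => Finset.Icc (-1 : ℤ) (K : ℤ)),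
        h χ * ∏ i, w i (χ i))
    (F G : (Fin N → ℤ) → ℝ)
    (hF : ∀ χ χ' : Fin N → ℤ, (∀ i, χ i ≤ χ' i) → F χ ≤ F χ')
    (hG : ∀ χ χ' : Fin N → ℤ, (∀ i, χ i ≤ χ' i) → G χ ≤ G χ') :
    (∑ χ ∈ Fintype.piFinset (fun _ : Fin N => Finset.Icc (-1 : ℤ) (K : ℤ)),
        F χ * h χ * ∏ i, w i (χ i)) *
      (∑ χ ∈ Fintype.piFinset (fun _ : Fin N => Finset.Icc (-1 : ℤ) (K : ℤ)),
        G χ * h χ * ∏ i, w i (χ i)) ≤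
    (∑ χ ∈ Fintype.piFinset (fun _ : Fin N => Finset.Icc (-1 : ℤ) (K : ℤ)),
        F χ * G χ * h χ * ∏ i, w i (χ i)) *
      (∑ χ ∈ Fintype.piFinset (fun _ : Fin N => Finset.Icc (-1 : ℤ) (K : ℤ)),
        h χ * ∏ i, w i (χ i)) :=
  stmt_4_general K N w hw0 h hh0 hls F G hF hG
end

section
/- Let K = 2, let p₀, p₁, p₂ > 0 with p₀ + p₁ + p₂ = 1, and let b > 1. Define F(u,v) = (p₀ + p₁u + p₂v², p₀ + p₁u + b·p₂v²). Then the fixed point equation F(u,v) = (u,v) with v real has a solution if and only if b - 1 ≤ (p₀+p₂)/(4p₀p₂) - 1/(p₀+p₂). -/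
/-!
Eliminating `u` (the first coordinate is affine in `u`) reduces a fixed point to a real root `v`
of the quadratic `A v² - s v + p₀` with `s = p₀ + p₂` and `A = p₂ (1 + (b - 1) s)`; since `b > 1`
makes `A > 0`, such a root exists iff the discriminant `s² - 4 A p₀` is nonnegative, and dividing
by `4 p₀ p₂ s` turns this into the stated inequality.
-/

theorem exists_quadratic_eq_zero_iff_discrim_nonneg {a b c : ℝ} (ha : a ≠ 0) :
    (∃ x, a * (x * x) + b * x + c = 0) ↔ 0 ≤ discrim a b c := by
  refine ⟨fun ⟨x, hx⟩ ↦ discrim_eq_sq_of_quadratic_eq_zero hx ▸ sq_nonneg _, fun hd ↦ ?_⟩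
  exact exists_quadratic_eq_zero ha ⟨√(discrim a b c), (Real.mul_self_sqrt hd).symm⟩

theorem exists_fixedPoint_iff_exists_root {p₀ p₁ p₂ b : ℝ} (hs : p₀ + p₂ ≠ 0)
    (hsum : p₀ + p₁ + p₂ = 1) :
    (∃ u v : ℝ, p₀ + p₁ * u + p₂ * v ^ 2 = u ∧ p₀ + p₁ * u + b * p₂ * v ^ 2 = v) ↔
      ∃ v, p₂ * (1 + (b - 1) * (p₀ + p₂)) * (v * v) + -(p₀ + p₂) * v + p₀ = 0 := by
  obtain rfl : p₁ = 1 - (p₀ + p₂) := by linarith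
  constructor
  · rintro ⟨u, v, hu, hv⟩
    exact ⟨v, by linear_combination (p₀ + p₂) * hv + (1 - (p₀ + p₂)) * hu⟩
  · rintro ⟨v, hv⟩
    have hu : (p₀ + p₂) * ((p₀ + p₂ * v ^ 2) / (p₀ + p₂)) = p₀ + p₂ * v ^ 2 :=
      mul_div_cancel₀ _ hs
    refine ⟨(p₀ + p₂ * v ^ 2) / (p₀ + p₂), v, by linear_combination -hu, ?_⟩
    refine mul_left_cancel₀ hs ?_
    linear_combination hv + (1 - (p₀ + p₂)) * hu

theorem discrim_fixedPoint_nonneg_iff {p₀ p₂ b : ℝ} (hp₀ : 0 < p₀) (hp₂ : 0 < p₂) :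
    0 ≤ discrim (p₂ * (1 + (b - 1) * (p₀ + p₂))) (-(p₀ + p₂)) p₀ ↔
      b - 1 ≤ (p₀ + p₂) / (4 * p₀ * p₂) - 1 / (p₀ + p₂) := by
  have hs : 0 < p₀ + p₂ := by positivity
  have hd : discrim (p₂ * (1 + (b - 1) * (p₀ + p₂))) (-(p₀ + p₂)) p₀ =
      4 * p₀ * p₂ * (p₀ + p₂) * ((p₀ + p₂) / (4 * p₀ * p₂) - 1 / (p₀ + p₂) - (b - 1)) := by
    rw [discrim]
    field_simp
    ring
  rw [hd, mul_nonneg_iff_of_pos_left (by positivity), sub_nonneg]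

theorem stmt_6_general (p₀ p₁ p₂ b : ℝ) (h0 : 0 < p₀) (h2 : 0 < p₂)
    (hsum : p₀ + p₁ + p₂ = 1) (hb : 1 < b) :
    (∃ u v : ℝ, p₀ + p₁ * u + p₂ * v ^ 2 = u ∧ p₀ + p₁ * u + b * p₂ * v ^ 2 = v)
      ↔ b - 1 ≤ (p₀ + p₂) / (4 * p₀ * p₂) - 1 / (p₀ + p₂) := by
  have hs : 0 < p₀ + p₂ := by positivity
  have hA : p₂ * (1 + (b - 1) * (p₀ + p₂)) ≠ 0 := by
    have : 0 < (b - 1) * (p₀ + p₂) := mul_pos (sub_pos.mpr hb) hs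
    positivity
  rw [exists_fixedPoint_iff_exists_root hs.ne' hsum,
    exists_quadratic_eq_zero_iff_discrim_nonneg hA, discrim_fixedPoint_nonneg_iff h0 h2]

theorem stmt_6 (p₀ p₁ p₂ b : ℝ) (h0 : 0 < p₀) (h1 : 0 < p₁) (h2 : 0 < p₂)
    (hsum : p₀ + p₁ + p₂ = 1) (hb : 1 < b) :
    (∃ u v : ℝ, p₀ + p₁ * u + p₂ * v ^ 2 = u ∧ p₀ + p₁ * u + b * p₂ * v ^ 2 = v)
      ↔ b - 1 ≤ (p₀ + p₂) / (4 * p₀ * p₂) - 1 / (p₀ + p₂) :=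
  stmt_6_general p₀ p₁ p₂ b h0 h2 hsum hb
end

section
/- Let K = 2, p₀, p₁, p₂ > 0 with p₀ + p₁ + p₂ = 1, and b = 1 + (p₀+p₂)/(4p₀p₂) - 1/(p₀+p₂). Then (u,v) with v = 2p₀/(p₀+p₂) and u = p₀/(p₀+p₂) + 4p₀²p₂/(p₀+p₂)³ is a fixed point of the map F(u,v) = (p₀ + p₁u + p₂v², p₀ + p₁u + b·p₂v²). -/
theorem stmt_7_general (p₀ p₁ p₂ : ℝ) (h0 : 0 < p₀) (h2 : 0 < p₂)
    (hsum : p₀ + p₁ + p₂ = 1)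
    (b : ℝ) (hb : b = 1 + (p₀ + p₂) / (4 * p₀ * p₂) - 1 / (p₀ + p₂))
    (v : ℝ) (hv : v = 2 * p₀ / (p₀ + p₂))
    (u : ℝ) (hu : u = p₀ / (p₀ + p₂) + 4 * p₀ ^ 2 * p₂ / (p₀ + p₂) ^ 3) :
    p₀ + p₁ * u + p₂ * v ^ 2 = u ∧ p₀ + p₁ * u + b * p₂ * v ^ 2 = v := by
  have hs : p₀ + p₂ ≠ 0 := by positivity
  have hp₁ : p₁ = 1 - (p₀ + p₂) := by linarith
  -- with p₁ = 1 - (p₀ + p₂), the first equation says (p₀ + p₂) u = p₀ + p₂ v²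
  have first : p₀ + p₁ * u + p₂ * v ^ 2 = u := by
    subst hp₁ hu hv
    field_simp
    ring
  -- the second coordinate of F exceeds the first by (b - 1) p₂ v²
  have gap : (b - 1) * p₂ * v ^ 2 = v - u := by
    subst hb hu hv
    field_simp
    ring
  exact ⟨first, by linarith⟩

theorem stmt_7 (p₀ p₁ p₂ : ℝ) (h0 : 0 < p₀) (h1 : 0 < p₁) (h2 : 0 < p₂)
    (hsum : p₀ + p₁ + p₂ = 1)
    (b : ℝ) (hb : b = 1 + (p₀ + p₂) / (4 * p₀ * p₂) - 1 / (p₀ + p₂))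
    (v : ℝ) (hv : v = 2 * p₀ / (p₀ + p₂))
    (u : ℝ) (hu : u = p₀ / (p₀ + p₂) + 4 * p₀ ^ 2 * p₂ / (p₀ + p₂) ^ 3) :
    p₀ + p₁ * u + p₂ * v ^ 2 = u ∧ p₀ + p₁ * u + b * p₂ * v ^ 2 = v :=
  stmt_7_general p₀ p₁ p₂ h0 h2 hsum b hb v hv u hu
end

section
/- Let K = 2, p₀, p₁, p₂ > 0 with p₀ + p₁ + p₂ = 1 and p₀ < p₂, and let b > 1. Then the polynomial P(v) = v²p₂(b-1) + (p₂/(p₀+p₂))(v-1)(v - p₀/p₂) has no real root v ≥ 1; in particular the map F(u,v) = (p₀ + p₁u + p₂v², p₀ + p₁u + b p₂ v²) has no fixed point with v ≥ 1. -/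
/-!
On `v ≥ 1` the polynomial `P` is a sum of a positive term `v² p₂ (b - 1)` and a nonnegative
one, since both roots `1` and `p₀ / p₂` of its second summand are at most `1`. At a fixed point
`(u, v)` of `F`, the first coordinate forces `(p₀ + p₂) u = p₀ + p₂ v²`, and subtracting the
coordinates gives `v - u = (b - 1) p₂ v²`; together these say exactly that `P(v) = 0`.
-/

lemma fixedPointPoly_pos {p₀ p₂ b v : ℝ} (hp₂ : 0 < p₂) (hp : 0 < p₀ + p₂) (h02 : p₀ < p₂)
    (hb : 1 < b) (hv : 1 ≤ v) :
    0 < v ^ 2 * p₂ * (b - 1) + (p₂ / (p₀ + p₂)) * (v - 1) * (v - p₀ / p₂) := by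
  have hb' : 0 < b - 1 := sub_pos.2 hb
  have hv₀ : 0 < v := by linarith
  have hroot : p₀ / p₂ ≤ v := ((div_lt_one hp₂).2 h02).le.trans hv
  have hfirst : 0 < v ^ 2 * p₂ * (b - 1) := by positivity
  have hsecond : 0 ≤ (p₂ / (p₀ + p₂)) * (v - 1) * (v - p₀ / p₂) :=
    mul_nonneg (mul_nonneg (div_pos hp₂ hp).le (sub_nonneg.2 hv)) (sub_nonneg.2 hroot)
  exact add_pos_of_pos_of_nonneg hfirst hsecond

lemma fixedPointPoly_eq_zero {p₀ p₁ p₂ b u v : ℝ} (hp₂ : p₂ ≠ 0) (hp : p₀ + p₂ ≠ 0)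
    (hsum : p₀ + p₁ + p₂ = 1) (hu : p₀ + p₁ * u + p₂ * v ^ 2 = u)
    (hv : p₀ + p₁ * u + b * p₂ * v ^ 2 = v) :
    v ^ 2 * p₂ * (b - 1) + (p₂ / (p₀ + p₂)) * (v - 1) * (v - p₀ / p₂) = 0 := by
  field_simp
  linear_combination (p₀ + p₂) * hv - (p₀ + p₂) * hu + hu - u * hsum

theorem stmt_8_general (p₀ p₁ p₂ b : ℝ) (h0 : 0 < p₀) (h2 : 0 < p₂)
    (hsum : p₀ + p₁ + p₂ = 1) (h02 : p₀ < p₂) (hb : 1 < b) :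
    (∀ v : ℝ, 1 ≤ v →
      v ^ 2 * p₂ * (b - 1) + (p₂ / (p₀ + p₂)) * (v - 1) * (v - p₀ / p₂) ≠ 0) ∧
    (∀ u v : ℝ, 1 ≤ v →
      ¬(p₀ + p₁ * u + p₂ * v ^ 2 = u ∧ p₀ + p₁ * u + b * p₂ * v ^ 2 = v)) := by
  have hp : 0 < p₀ + p₂ := add_pos h0 h2
  have hP : ∀ v : ℝ, 1 ≤ v →
      0 < v ^ 2 * p₂ * (b - 1) + (p₂ / (p₀ + p₂)) * (v - 1) * (v - p₀ / p₂) :=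
    fun v hv ↦ fixedPointPoly_pos h2 hp h02 hb hv
  refine ⟨fun v hv ↦ (hP v hv).ne', ?_⟩
  rintro u v hv ⟨hu, hv'⟩
  exact (hP v hv).ne' (fixedPointPoly_eq_zero h2.ne' hp.ne' hsum hu hv')

theorem stmt_8 (p₀ p₁ p₂ b : ℝ) (h0 : 0 < p₀) (h1 : 0 < p₁) (h2 : 0 < p₂)
    (hsum : p₀ + p₁ + p₂ = 1) (h02 : p₀ < p₂) (hb : 1 < b) :
    (∀ v : ℝ, 1 ≤ v →
      v ^ 2 * p₂ * (b - 1) + (p₂ / (p₀ + p₂)) * (v - 1) * (v - p₀ / p₂) ≠ 0) ∧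
    (∀ u v : ℝ, 1 ≤ v →
      ¬(p₀ + p₁ * u + p₂ * v ^ 2 = u ∧ p₀ + p₁ * u + b * p₂ * v ^ 2 = v)) :=
  stmt_8_general p₀ p₁ p₂ b h0 h2 hsum h02 hb
end

section
/- Let p₁, p₂ > 0 with p₁ + p₂ = 1 and b > 1. With (u_n, v_n) defined by (u₀,v₀)=(1,1) and (u_{n+1},v_{n+1}) = (p₁u_n + p₂v_n², p₁u_n + b p₂ v_n²), the sequences u_n and v_n both tend to infinity as n → ∞. -/
noncomputable def orbit (p₁ p₂ b : ℝ) : ℕ → ℝ × ℝ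
  | 0 => (1, 1)
  | n + 1 =>
      (p₁ * (orbit p₁ p₂ b n).1 + p₂ * (orbit p₁ p₂ b n).2 ^ 2,
       p₁ * (orbit p₁ p₂ b n).1 + b * p₂ * (orbit p₁ p₂ b n).2 ^ 2)

/-! Writing `(uₙ, vₙ)` for the orbit, the gap satisfies `vₙ₊₁ - uₙ₊₁ = (b - 1) p₂ vₙ²`, and since
`p₁ = 1 - p₂` the increment of `u` is `uₙ₊₁ - uₙ = p₂ (vₙ² - uₙ) ≥ p₂ (vₙ - uₙ)` as long as
`1 ≤ uₙ ≤ vₙ`, which is invariant. Hence `u` increases by at least `p₂² (b - 1)` at every step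
after the first, so `u` grows linearly and `v ≥ u` follows it to infinity. -/

namespace orbit

variable {p₁ p₂ b : ℝ}

theorem fst_succ_sub_fst (hsum : p₁ + p₂ = 1) (n : ℕ) :
    (orbit p₁ p₂ b (n + 1)).1 - (orbit p₁ p₂ b n).1 =
      p₂ * ((orbit p₁ p₂ b n).2 ^ 2 - (orbit p₁ p₂ b n).1) := by
  obtain rfl : p₁ = 1 - p₂ := by linarith
  simp only [orbit]
  ring

theorem snd_sub_fst_succ (n : ℕ) :
    (orbit p₁ p₂ b (n + 1)).2 - (orbit p₁ p₂ b (n + 1)).1 =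
      (b - 1) * p₂ * (orbit p₁ p₂ b n).2 ^ 2 := by
  simp only [orbit]
  ring

theorem one_le_fst_and_fst_le_snd (h2 : 0 ≤ p₂) (hsum : p₁ + p₂ = 1) (hb : 1 ≤ b) (n : ℕ) :
    1 ≤ (orbit p₁ p₂ b n).1 ∧ (orbit p₁ p₂ b n).1 ≤ (orbit p₁ p₂ b n).2 := by
  induction n with
  | zero => simp [orbit]
  | succ n ih =>
    obtain ⟨hu, huv⟩ := ih
    have hstep := fst_succ_sub_fst (b := b) hsum n
    have hgap := snd_sub_fst_succ (p₁ := p₁) (p₂ := p₂) (b := b) n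
    have hsq : (orbit p₁ p₂ b n).1 ≤ (orbit p₁ p₂ b n).2 ^ 2 := by nlinarith
    constructor
    · nlinarith [mul_nonneg h2 (sub_nonneg.2 hsq)]
    · nlinarith [mul_nonneg (mul_nonneg (sub_nonneg.2 hb) h2) (sq_nonneg (orbit p₁ p₂ b n).2)]

theorem gap_le_fst_succ_sub_fst (h2 : 0 ≤ p₂) (hsum : p₁ + p₂ = 1) (hb : 1 ≤ b) (n : ℕ) :
    p₂ * ((orbit p₁ p₂ b n).2 - (orbit p₁ p₂ b n).1) ≤
      (orbit p₁ p₂ b (n + 1)).1 - (orbit p₁ p₂ b n).1 := by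
  obtain ⟨hu, huv⟩ := one_le_fst_and_fst_le_snd h2 hsum hb n
  rw [fst_succ_sub_fst hsum]
  gcongr
  nlinarith

theorem one_add_mul_le_fst_succ (h2 : 0 ≤ p₂) (hsum : p₁ + p₂ = 1) (hb : 1 ≤ b) (n : ℕ) :
    1 + n * (p₂ ^ 2 * (b - 1)) ≤ (orbit p₁ p₂ b (n + 1)).1 := by
  induction n with
  | zero => simpa using (one_le_fst_and_fst_le_snd h2 hsum hb 1).1
  | succ n ih =>
    have hincr := gap_le_fst_succ_sub_fst h2 hsum hb (n + 1)
    rw [snd_sub_fst_succ] at hincr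
    obtain ⟨hu, huv⟩ := one_le_fst_and_fst_le_snd h2 hsum hb n
    have hsq : 1 ≤ (orbit p₁ p₂ b n).2 ^ 2 := one_le_pow₀ (hu.trans huv)
    push_cast
    nlinarith [mul_nonneg (mul_nonneg (sub_nonneg.2 hb) (sq_nonneg p₂)) (sub_nonneg.2 hsq)]

end orbit

theorem stmt_10_general (p₁ p₂ b : ℝ) (h2 : 0 < p₂) (hsum : p₁ + p₂ = 1)
    (hb : 1 < b) :
    Filter.Tendsto (fun n => (orbit p₁ p₂ b n).1) Filter.atTop Filter.atTop ∧
    Filter.Tendsto (fun n => (orbit p₁ p₂ b n).2) Filter.atTop Filter.atTop := by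
  have hlinear : Filter.Tendsto (fun n : ℕ => (n : ℝ) * (p₂ ^ 2 * (b - 1))) .atTop .atTop :=
    tendsto_natCast_atTop_atTop.atTop_mul_const (by positivity [sub_pos.2 hb])
  have hu : Filter.Tendsto (fun n => (orbit p₁ p₂ b n).1) .atTop .atTop := by
    refine (Filter.tendsto_add_atTop_iff_nat 1).mp (Filter.tendsto_atTop_mono (fun n => ?_) hlinear)
    linarith [orbit.one_add_mul_le_fst_succ h2.le hsum hb.le n]
  exact ⟨hu, Filter.tendsto_atTop_mono
    (fun n => (orbit.one_le_fst_and_fst_le_snd h2.le hsum hb.le n).2) hu⟩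

theorem stmt_10 (p₁ p₂ b : ℝ) (h1 : 0 < p₁) (h2 : 0 < p₂) (hsum : p₁ + p₂ = 1)
    (hb : 1 < b) :
    Filter.Tendsto (fun n => (orbit p₁ p₂ b n).1) Filter.atTop Filter.atTop ∧
    Filter.Tendsto (fun n => (orbit p₁ p₂ b n).2) Filter.atTop Filter.atTop :=
  stmt_10_general p₁ p₂ b h2 hsum hb
end

section
/- Let p₁, p₂ > 0 with p₁ + p₂ = 1 and b > 1, and (u_n, v_n) the orbit of (1,1) under F(u,v) = (p₁u + p₂v², p₁u + b p₂v²). Then v_n > p₂ b v_{n-1}² for all n ≥ 1, and consequently the sequence n ↦ (p₂ b v_n)^{2^{-n}} is strictly increasing. -/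
theorem strictMono_rpow_inv_two_pow_of_sq_lt {x : ℕ → ℝ} (hpos : ∀ n, 0 < x n)
    (hsq : ∀ n, x n ^ 2 < x (n + 1)) : StrictMono fun n => x n ^ ((2 : ℝ)⁻¹ ^ n) := by
  refine strictMono_nat_of_lt_succ fun n => ?_
  calc x n ^ ((2 : ℝ)⁻¹ ^ n) = (x n ^ (2 : ℝ)) ^ ((2 : ℝ)⁻¹ ^ (n + 1)) := by
        rw [← Real.rpow_mul (hpos n).le, pow_succ, ← mul_assoc, mul_comm (2 : ℝ), mul_assoc,
          mul_inv_cancel₀ two_ne_zero, mul_one]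
    _ < x (n + 1) ^ ((2 : ℝ)⁻¹ ^ (n + 1)) := by
        rw [Real.rpow_two]
        exact Real.rpow_lt_rpow (by positivity) (hsq n) (by positivity)

section Orbit

variable {p₁ p₂ b : ℝ}

theorem orbit_pos (h1 : 0 < p₁) (h2 : 0 < p₂) (hb : 0 < b) (n : ℕ) :
    0 < (orbit p₁ p₂ b n).1 ∧ 0 < (orbit p₁ p₂ b n).2 := by
  induction n with
  | zero => simp [orbit]
  | succ n ih =>
    obtain ⟨hu, hv⟩ := ih
    exact ⟨by simp only [orbit]; positivity, by simp only [orbit]; positivity⟩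

theorem mul_sq_orbit_snd_lt (h1 : 0 < p₁) (h2 : 0 < p₂) (hb : 0 < b) (n : ℕ) :
    p₂ * b * (orbit p₁ p₂ b n).2 ^ 2 < (orbit p₁ p₂ b (n + 1)).2 := by
  have hu := (orbit_pos h1 h2 hb n).1
  simp only [orbit]
  nlinarith [mul_pos h1 hu]

end Orbit

theorem stmt_11_general (p₁ p₂ b : ℝ) (h1 : 0 < p₁) (h2 : 0 < p₂)
    (hb : 1 < b) :
    (∀ n : ℕ, 1 ≤ n → (orbit p₁ p₂ b n).2 > p₂ * b * (orbit p₁ p₂ b (n - 1)).2 ^ 2) ∧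
    StrictMono (fun n : ℕ => (p₂ * b * (orbit p₁ p₂ b n).2) ^ ((2 : ℝ)⁻¹ ^ n)) := by
  have hb0 : 0 < b := one_pos.trans hb
  have hc : 0 < p₂ * b := mul_pos h2 hb0
  refine ⟨fun n hn => ?_, strictMono_rpow_inv_two_pow_of_sq_lt
    (fun n => mul_pos hc (orbit_pos h1 h2 hb0 n).2) fun n => ?_⟩
  · obtain ⟨m, rfl⟩ := Nat.exists_eq_add_of_le' hn
    exact mul_sq_orbit_snd_lt h1 h2 hb0 m
  · have := mul_lt_mul_of_pos_left (mul_sq_orbit_snd_lt h1 h2 hb0 n) hc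
    linarith

theorem stmt_11 (p₁ p₂ b : ℝ) (h1 : 0 < p₁) (h2 : 0 < p₂) (hsum : p₁ + p₂ = 1)
    (hb : 1 < b) :
    (∀ n : ℕ, 1 ≤ n → (orbit p₁ p₂ b n).2 > p₂ * b * (orbit p₁ p₂ b (n - 1)).2 ^ 2) ∧
    StrictMono (fun n : ℕ => (p₂ * b * (orbit p₁ p₂ b n).2) ^ ((2 : ℝ)⁻¹ ^ n)) :=
  stmt_11_general p₁ p₂ b h1 h2 hb
end

section
/- Let p₁, p₂ > 0 with p₁ + p₂ = 1 and b > 1, and (u_n, v_n) the orbit of (1,1) under F(u,v) = (p₁u + p₂v², p₁u + b p₂v²). Then the limit ρ(b) = lim_{n→∞} (v_n)^{2^{-n}} exists, equals sup_n (p₂ b v_n)^{2^{-n}}, and satisfies √(p₂b(p₁+p₂b)) ≤ ρ(b) ≤ p₁ + p₂b. -/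
open Filter Topology

theorem rpow_pow_two_pow_inv {a : ℝ} (ha : 0 ≤ a) (n : ℕ) :
    (a ^ 2 ^ n) ^ ((2 : ℝ)⁻¹ ^ n) = a := by
  rw [← Real.rpow_natCast, ← Real.rpow_mul ha]
  simp

theorem monotone_rpow_inv_two_pow_of_sq_le {x : ℕ → ℝ} (hx : ∀ n, 0 ≤ x n)
    (hsq : ∀ n, x n ^ 2 ≤ x (n + 1)) : Monotone fun n => x n ^ ((2 : ℝ)⁻¹ ^ n) := by
  refine monotone_nat_of_le_succ fun n => ?_
  calc x n ^ ((2 : ℝ)⁻¹ ^ n) = (x n ^ 2) ^ ((2 : ℝ)⁻¹ ^ (n + 1)) := by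
        rw [← Real.rpow_natCast (x n) 2, ← Real.rpow_mul (hx n), pow_succ]
        congr 1
        ring
    _ ≤ x (n + 1) ^ ((2 : ℝ)⁻¹ ^ (n + 1)) := by gcongr; exact hsq n

theorem tendsto_rpow_of_tendsto_const_mul_rpow {ι : Type*} {l : Filter ι} {x e : ι → ℝ}
    {c ρ : ℝ} (hc : 0 < c) (hx : ∀ i, 0 ≤ x i) (he : Tendsto e l (𝓝 0))
    (h : Tendsto (fun i => (c * x i) ^ e i) l (𝓝 ρ)) :
    Tendsto (fun i => x i ^ e i) l (𝓝 ρ) := by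
  have hce : Tendsto (fun i => c ^ e i) l (𝓝 1) := by
    have hcont := (Real.continuousAt_const_rpow hc.ne').tendsto.comp he
    rwa [Real.rpow_zero] at hcont
  have hquot := h.div hce one_ne_zero
  rw [div_one] at hquot
  refine hquot.congr fun i => ?_
  rw [Pi.div_apply, Real.mul_rpow hc.le (hx i), mul_div_cancel_left₀ _ (Real.rpow_pos_of_pos hc _).ne']

section Orbit

variable {p₁ p₂ b : ℝ}

theorem orbit_succ_fst (n : ℕ) :
    (orbit p₁ p₂ b (n + 1)).1 = p₁ * (orbit p₁ p₂ b n).1 + p₂ * (orbit p₁ p₂ b n).2 ^ 2 := rfl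

theorem orbit_succ_snd (n : ℕ) :
    (orbit p₁ p₂ b (n + 1)).2 = p₁ * (orbit p₁ p₂ b n).1 + b * p₂ * (orbit p₁ p₂ b n).2 ^ 2 :=
  rfl

theorem orbit_snd_one : (orbit p₁ p₂ b 1).2 = p₁ + p₂ * b := by
  simp [orbit]; ring

theorem one_le_orbit_fst_le_snd (h1 : 0 ≤ p₁) (h2 : 0 ≤ p₂) (hsum : p₁ + p₂ = 1) (hb : 1 ≤ b)
    (n : ℕ) : 1 ≤ (orbit p₁ p₂ b n).1 ∧ (orbit p₁ p₂ b n).1 ≤ (orbit p₁ p₂ b n).2 := by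
  induction n with
  | zero => simp [orbit]
  | succ n ih =>
    obtain ⟨hu, huv⟩ := ih
    have hv2 : 1 ≤ (orbit p₁ p₂ b n).2 ^ 2 := one_le_pow₀ (hu.trans huv)
    have hbp₂ : p₂ * (orbit p₁ p₂ b n).2 ^ 2 ≤ b * p₂ * (orbit p₁ p₂ b n).2 ^ 2 := by
      gcongr; exact le_mul_of_one_le_left h2 hb
    rw [orbit_succ_fst, orbit_succ_snd]
    constructor <;> nlinarith

theorem one_le_orbit_snd (h1 : 0 ≤ p₁) (h2 : 0 ≤ p₂) (hsum : p₁ + p₂ = 1) (hb : 1 ≤ b)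
    (n : ℕ) : 1 ≤ (orbit p₁ p₂ b n).2 :=
  (one_le_orbit_fst_le_snd h1 h2 hsum hb n).1.trans (one_le_orbit_fst_le_snd h1 h2 hsum hb n).2

theorem orbit_snd_succ_le (h1 : 0 ≤ p₁) (h2 : 0 ≤ p₂) (hsum : p₁ + p₂ = 1) (hb : 1 ≤ b)
    (n : ℕ) : (orbit p₁ p₂ b (n + 1)).2 ≤ (p₁ + p₂ * b) * (orbit p₁ p₂ b n).2 ^ 2 := by
  obtain ⟨hu, huv⟩ := one_le_orbit_fst_le_snd h1 h2 hsum hb n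
  have huv2 : (orbit p₁ p₂ b n).1 ≤ (orbit p₁ p₂ b n).2 ^ 2 := by nlinarith
  rw [orbit_succ_snd]
  nlinarith

theorem mul_orbit_snd_le_pow (h1 : 0 ≤ p₁) (h2 : 0 ≤ p₂) (hsum : p₁ + p₂ = 1) (hb : 1 ≤ b)
    (n : ℕ) : (p₁ + p₂ * b) * (orbit p₁ p₂ b n).2 ≤ (p₁ + p₂ * b) ^ 2 ^ n := by
  have hA : 0 ≤ p₁ + p₂ * b := by positivity
  induction n with
  | zero => simp [orbit]
  | succ n ih =>
    calc (p₁ + p₂ * b) * (orbit p₁ p₂ b (n + 1)).2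
        ≤ (p₁ + p₂ * b) * ((p₁ + p₂ * b) * (orbit p₁ p₂ b n).2 ^ 2) := by
          gcongr; exact orbit_snd_succ_le h1 h2 hsum hb n
      _ = ((p₁ + p₂ * b) * (orbit p₁ p₂ b n).2) ^ 2 := by ring
      _ ≤ ((p₁ + p₂ * b) ^ 2 ^ n) ^ 2 := by
          gcongr
          exact mul_nonneg hA (zero_le_one.trans (one_le_orbit_snd h1 h2 hsum hb n))
      _ = (p₁ + p₂ * b) ^ 2 ^ (n + 1) := by rw [← pow_mul, pow_succ]

theorem sq_le_mul_orbit_snd_succ {n : ℕ} (h1 : 0 ≤ p₁) (hpb : 0 ≤ p₂ * b)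
    (hu : 0 ≤ (orbit p₁ p₂ b n).1) :
    (p₂ * b * (orbit p₁ p₂ b n).2) ^ 2 ≤ p₂ * b * (orbit p₁ p₂ b (n + 1)).2 := by
  rw [orbit_succ_snd]
  nlinarith [mul_nonneg hpb (mul_nonneg h1 hu)]

end Orbit

theorem stmt_14 (p₁ p₂ b : ℝ) (h1 : 0 < p₁) (h2 : 0 < p₂) (hsum : p₁ + p₂ = 1)
    (hb : 1 < b) :
    ∃ ρ : ℝ,
      Filter.Tendsto (fun n : ℕ => ((orbit p₁ p₂ b n).2) ^ ((2 : ℝ)⁻¹ ^ n))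
        Filter.atTop (nhds ρ) ∧
      ρ = ⨆ n : ℕ, (p₂ * b * (orbit p₁ p₂ b n).2) ^ ((2 : ℝ)⁻¹ ^ n) ∧
      Real.sqrt (p₂ * b * (p₁ + p₂ * b)) ≤ ρ ∧ ρ ≤ p₁ + p₂ * b := by
  have hpb : 0 < p₂ * b := by positivity
  have hv : ∀ n, 0 ≤ (orbit p₁ p₂ b n).2 :=
    fun n => zero_le_one.trans (one_le_orbit_snd h1.le h2.le hsum hb.le n)
  set w : ℕ → ℝ := fun n => (p₂ * b * (orbit p₁ p₂ b n).2) ^ ((2 : ℝ)⁻¹ ^ n)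
  have hmono : Monotone w := monotone_rpow_inv_two_pow_of_sq_le
    (fun n => mul_nonneg hpb.le (hv n))
    (fun n => sq_le_mul_orbit_snd_succ h1.le hpb.le
      (zero_le_one.trans (one_le_orbit_fst_le_snd h1.le h2.le hsum hb.le n).1))
  have hle : ∀ n, w n ≤ p₁ + p₂ * b := fun n => by
    have hA : 0 ≤ p₁ + p₂ * b := by positivity
    calc w n = (p₂ * b * (orbit p₁ p₂ b n).2) ^ ((2 : ℝ)⁻¹ ^ n) := rfl
      _ ≤ ((p₁ + p₂ * b) ^ 2 ^ n) ^ ((2 : ℝ)⁻¹ ^ n) := by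
          gcongr
          · exact mul_nonneg hpb.le (hv n)
          · nlinarith [mul_orbit_snd_le_pow h1.le h2.le hsum hb.le n, hv n]
      _ = p₁ + p₂ * b := rpow_pow_two_pow_inv hA n
  have hbdd : BddAbove (Set.range w) := ⟨_, Set.forall_mem_range.2 hle⟩
  have hw1 : Real.sqrt (p₂ * b * (p₁ + p₂ * b)) = w 1 := by
    simp [w, orbit_snd_one, Real.sqrt_eq_rpow]
  refine ⟨⨆ n, w n, ?_, rfl, hw1 ▸ le_ciSup hbdd 1, ciSup_le hle⟩
  exact tendsto_rpow_of_tendsto_const_mul_rpow hpb hv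
    (tendsto_pow_atTop_nhds_zero_of_lt_one (by norm_num) (by norm_num))
    (tendsto_atTop_ciSup hmono hbdd)
end

section
/- Let p₁, p₂ > 0 with p₁ + p₂ = 1 and b > 1, and (u_n, v_n) the orbit of (1,1) under F(u,v) = (p₁u + p₂v², p₁u + b p₂v²). Then lim_{n→∞} (u_n)^{2^{-n}} exists and equals lim_{n→∞} (v_n)^{2^{-n}}. -/
open Filter Topology

theorem exists_tendsto_div_pow_of_abs_sub_mul_le {x : ℕ → ℝ} {c M : ℝ} (hc : 1 < c)
    (hx : ∀ n, |x (n + 1) - c * x n| ≤ M) :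
    ∃ L, Tendsto (fun n => x n / c ^ n) atTop (𝓝 L) := by
  have hc0 : 0 < c := one_pos.trans hc
  refine cauchySeq_tendsto_of_complete <|
    cauchySeq_of_le_geometric c⁻¹ (M / c) (inv_lt_one_of_one_lt₀ hc) fun n => ?_
  have hcn : 0 < c ^ (n + 1) := pow_pos hc0 _
  calc dist (x n / c ^ n) (x (n + 1) / c ^ (n + 1))
      = |x (n + 1) - c * x n| / c ^ (n + 1) := by
        rw [Real.dist_eq, abs_sub_comm, ← abs_of_pos hcn, ← abs_div, abs_of_pos hcn]
        congr 1
        field_simp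
        ring
    _ ≤ M / c ^ (n + 1) := div_le_div_of_nonneg_right (hx n) hcn.le
    _ = M / c * c⁻¹ ^ n := by rw [inv_pow, pow_succ]; field_simp

theorem exists_tendsto_rpow_inv_two_pow_of_sq_bounds {u : ℕ → ℝ} {A B : ℝ} (hA : 0 < A)
    (hu : ∀ n, 0 < u n) (hlow : ∀ n, A * u n ^ 2 ≤ u (n + 1))
    (hupp : ∀ n, u (n + 1) ≤ B * u n ^ 2) :
    ∃ ρ, Tendsto (fun n => u n ^ ((2 : ℝ)⁻¹ ^ n)) atTop (𝓝 ρ) := by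
  have hB : 0 < B := pos_of_mul_pos_left ((mul_pos hA (pow_pos (hu 0) 2)).trans_le
    ((hlow 0).trans (hupp 0))) (pow_pos (hu 0) 2).le
  have hlog : ∀ n, |Real.log (u (n + 1)) - 2 * Real.log (u n)| ≤ |Real.log A| + |Real.log B| := by
    intro n
    have hsq : 0 < u n ^ 2 := pow_pos (hu n) 2
    have hl := Real.log_le_log (mul_pos hA hsq) (hlow n)
    have hr := Real.log_le_log (hu (n + 1)) (hupp n)
    rw [Real.log_mul hA.ne' hsq.ne', Real.log_pow] at hl
    rw [Real.log_mul hB.ne' hsq.ne', Real.log_pow] at hr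
    push_cast at hl hr
    rw [abs_le]
    constructor <;> linarith [neg_abs_le (Real.log A), le_abs_self (Real.log B),
      abs_nonneg (Real.log A), abs_nonneg (Real.log B)]
  obtain ⟨L, hL⟩ := exists_tendsto_div_pow_of_abs_sub_mul_le (x := fun n => Real.log (u n))
    one_lt_two hlog
  refine ⟨Real.exp L, ((Real.continuous_exp.tendsto L).comp hL).congr fun n => ?_⟩
  rw [Function.comp_apply, Real.rpow_def_of_pos (hu n), inv_pow, div_eq_mul_inv]

theorem tendsto_rpow_of_le_of_le_mul {u v t : ℕ → ℝ} {b ρ : ℝ} (hb : 0 < b) (hu : ∀ n, 0 ≤ u n)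
    (huv : ∀ n, u n ≤ v n) (hvu : ∀ n, v n ≤ b * u n) (ht : ∀ n, 0 ≤ t n)
    (ht0 : Tendsto t atTop (𝓝 0)) (hρ : Tendsto (fun n => u n ^ t n) atTop (𝓝 ρ)) :
    Tendsto (fun n => v n ^ t n) atTop (𝓝 ρ) := by
  have hbt : Tendsto (fun n => b ^ t n) atTop (𝓝 1) := by
    simpa [Function.comp_def] using (Real.continuousAt_const_rpow (b := 0) hb.ne').tendsto.comp ht0
  refine tendsto_of_tendsto_of_tendsto_of_le_of_le hρ (by simpa using hbt.mul hρ)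
    (fun n => Real.rpow_le_rpow (hu n) (huv n) (ht n)) fun n => ?_
  calc v n ^ t n ≤ (b * u n) ^ t n := Real.rpow_le_rpow ((hu n).trans (huv n)) (hvu n) (ht n)
    _ = b ^ t n * u n ^ t n := Real.mul_rpow hb.le (hu n)

section Orbit

variable {p₁ p₂ b : ℝ}

theorem orbit_bounds (h1 : 0 ≤ p₁) (h2 : 0 ≤ p₂) (hsum : p₁ + p₂ = 1) (hb : 1 ≤ b) (n : ℕ) :
    1 ≤ (orbit p₁ p₂ b n).1 ∧ (orbit p₁ p₂ b n).1 ≤ (orbit p₁ p₂ b n).2 ∧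
      (orbit p₁ p₂ b n).2 ≤ b * (orbit p₁ p₂ b n).1 := by
  induction n with
  | zero => simpa [orbit] using hb
  | succ n ih =>
    obtain ⟨hu, huv, hvu⟩ := ih
    set u := (orbit p₁ p₂ b n).1
    set v := (orbit p₁ p₂ b n).2
    have hv2 : 1 ≤ v ^ 2 := one_le_pow₀ (hu.trans huv)
    simp only [orbit]
    refine ⟨?_, ?_, ?_⟩
    · nlinarith [mul_le_mul_of_nonneg_left hu h1, mul_le_mul_of_nonneg_left hv2 h2]
    · nlinarith [mul_nonneg (mul_nonneg (sub_nonneg.2 hb) h2) (sq_nonneg v)]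
    · nlinarith [mul_nonneg (mul_nonneg (sub_nonneg.2 hb) h1) (zero_le_one.trans hu)]

theorem orbit_fst_succ_bounds (h1 : 0 ≤ p₁) (h2 : 0 ≤ p₂) (hsum : p₁ + p₂ = 1) (hb : 1 ≤ b)
    (n : ℕ) :
    p₂ * (orbit p₁ p₂ b n).1 ^ 2 ≤ (orbit p₁ p₂ b (n + 1)).1 ∧
      (orbit p₁ p₂ b (n + 1)).1 ≤ (p₁ + p₂ * b ^ 2) * (orbit p₁ p₂ b n).1 ^ 2 := by
  obtain ⟨hu, huv, hvu⟩ := orbit_bounds h1 h2 hsum hb n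
  set u := (orbit p₁ p₂ b n).1
  set v := (orbit p₁ p₂ b n).2
  have hu0 : 0 ≤ u := zero_le_one.trans hu
  have hsq : u ^ 2 ≤ v ^ 2 := pow_le_pow_left₀ hu0 huv 2
  have hsq' : v ^ 2 ≤ b ^ 2 * u ^ 2 := by
    rw [← mul_pow]; exact pow_le_pow_left₀ (hu0.trans huv) hvu 2
  have hu_le : u ≤ u ^ 2 := by nlinarith
  show p₂ * u ^ 2 ≤ p₁ * u + p₂ * v ^ 2 ∧ p₁ * u + p₂ * v ^ 2 ≤ (p₁ + p₂ * b ^ 2) * u ^ 2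
  constructor
  · nlinarith [mul_le_mul_of_nonneg_left hsq h2, mul_nonneg h1 hu0]
  · nlinarith [mul_le_mul_of_nonneg_left hsq' h2, mul_le_mul_of_nonneg_left hu_le h1]

end Orbit

theorem stmt_15 (p₁ p₂ b : ℝ) (h1 : 0 < p₁) (h2 : 0 < p₂) (hsum : p₁ + p₂ = 1)
    (hb : 1 < b) :
    ∃ ρ : ℝ,
      Filter.Tendsto (fun n : ℕ => ((orbit p₁ p₂ b n).1) ^ ((2 : ℝ)⁻¹ ^ n))
        Filter.atTop (nhds ρ) ∧
      Filter.Tendsto (fun n : ℕ => ((orbit p₁ p₂ b n).2) ^ ((2 : ℝ)⁻¹ ^ n))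
        Filter.atTop (nhds ρ) := by
  have hbounds := orbit_bounds h1.le h2.le hsum hb.le
  have hsucc := orbit_fst_succ_bounds h1.le h2.le hsum hb.le
  have hpos : ∀ n, 0 < (orbit p₁ p₂ b n).1 := fun n => one_pos.trans_le (hbounds n).1
  obtain ⟨ρ, hρ⟩ := exists_tendsto_rpow_inv_two_pow_of_sq_bounds h2 hpos
    (fun n => (hsucc n).1) (fun n => (hsucc n).2)
  refine ⟨ρ, hρ, tendsto_rpow_of_le_of_le_mul (one_pos.trans hb) (fun n => (hpos n).le)
    (fun n => (hbounds n).2.1) (fun n => (hbounds n).2.2) (fun n => by positivity)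
    (tendsto_pow_atTop_nhds_zero_of_lt_one (by norm_num) (by norm_num)) hρ⟩
end
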